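/- Let 𝒜 be a nonempty finite alphabet and let ω be a Toeplitz sequence over 𝒜. Then the set of Toeplitz sequences contained in Z(ω,σ) is a residual subset of Z(ω,σ): it is a countable intersection of open subsets of Z(ω,σ) and it is dense in Z(ω,σ). -/

import Mathlib

/-!
Toeplitz sequences are uniformly recurrent, so `Z(ω,σ)` is minimal: `Z(ω,σ) ⊆ Z(y,σ)` for every
`y ∈ Z(ω,σ)`. Fix a Toeplitz `y ∈ Z(ω,σ)`, a position `n` and a common period `P` of `y` on
`0, …, n`. Every `z ∈ Z(y,σ)` carries the `P`-periodic part of `y` shifted by some phase `ρ < P`;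
for a fixed phase this is a closed condition on `z`, and the phases that `y` itself admits keep
position `n` periodic. So the finitely many bad phases are excluded near `y`: periodicity at `n` is
an open condition around Toeplitz points, and the Toeplitz points form a Gδ. They are dense because
the orbit of `ω` consists of Toeplitz sequences.
-/

/-- The one-sided shift on sequences.  Sequences are 0-indexed here: index `n`
stands for position `n+1` of the paper's sequences `{1,2,3,…} → 𝒜`. -/
def shift {𝒜 : Type*} (x : ℕ → 𝒜) : ℕ → 𝒜 := fun n => x (n + 1)

/-- `Z(ω,σ)`: the closure of the forward shift-orbit of `ω`. -/
def orbitClosure {𝒜 : Type*} [TopologicalSpace 𝒜] (ω : ℕ → 𝒜) : Set (ℕ → 𝒜) :=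
  closure {y | ∃ n : ℕ, shift^[n] ω = y}

/-- A sequence is Toeplitz if every position is periodically repeated. -/
def IsToeplitz {𝒜 : Type*} (x : ℕ → 𝒜) : Prop :=
  ∀ n : ℕ, ∃ p : ℕ, 0 < p ∧ ∀ k : ℕ, 0 < k → x (n + k * p) = x n

open Set Filter Topology PiNat

section Periods

variable {𝒜 : Type*}

theorem shift_iterate_apply (m : ℕ) (x : ℕ → 𝒜) (n : ℕ) : shift^[m] x n = x (n + m) := by
  induction m generalizing x with
  | zero => rfl
  | succ m ih => rw [Function.iterate_succ_apply, ih]; simp only [shift, add_assoc]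

theorem IsToeplitz.shift_iterate {x : ℕ → 𝒜} (hx : IsToeplitz x) (m : ℕ) :
    IsToeplitz (shift^[m] x) := by
  intro n
  obtain ⟨p, hp, hper⟩ := hx (n + m)
  refine ⟨p, hp, fun k hk => ?_⟩
  simpa only [shift_iterate_apply, add_right_comm] using hper k hk

def HasPeriodAt (x : ℕ → 𝒜) (i P : ℕ) : Prop := ∀ k : ℕ, x (i + k * P) = x i

theorem HasPeriodAt.mul_left {x : ℕ → 𝒜} {i P : ℕ} (h : HasPeriodAt x i P) (q : ℕ) :
    HasPeriodAt x i (q * P) := fun k => by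
  simpa only [mul_assoc] using h (k * q)

theorem IsToeplitz.exists_hasPeriodAt {x : ℕ → 𝒜} (hx : IsToeplitz x) (i : ℕ) :
    ∃ p, 0 < p ∧ HasPeriodAt x i p := by
  obtain ⟨p, hp, hper⟩ := hx i
  refine ⟨p, hp, fun k => ?_⟩
  rcases k.eq_zero_or_pos with rfl | hk
  · simp
  · exact hper k hk

theorem IsToeplitz.exists_hasPeriodAt_of_lt {x : ℕ → 𝒜} (hx : IsToeplitz x) (N : ℕ) :
    ∃ P, 0 < P ∧ ∀ i < N, HasPeriodAt x i P := by
  induction N with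
  | zero => exact ⟨1, one_pos, fun i hi => absurd hi i.not_lt_zero⟩
  | succ N ih =>
    obtain ⟨P, hP, hall⟩ := ih
    obtain ⟨p, hp, hN⟩ := hx.exists_hasPeriodAt N
    refine ⟨p * P, Nat.mul_pos hp hP, fun i hi => ?_⟩
    rcases Nat.lt_succ_iff_lt_or_eq.1 hi with hi | rfl
    · exact (hall i hi).mul_left p
    · exact mul_comm P p ▸ hN.mul_left P

end Periods

section Skeleton

variable {𝒜 : Type*}

/-- The `P`-skeleton of `y` consists of the residues `c < P` with `HasPeriodAt y c P`; `z` follows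
it with phase `ρ` if `z j` is the skeleton symbol at residue `j + ρ` wherever there is one. -/
def FollowsSkeleton (y : ℕ → 𝒜) (P ρ : ℕ) (z : ℕ → 𝒜) : Prop :=
  ∀ j, HasPeriodAt y ((j + ρ) % P) P → z j = y ((j + ρ) % P)

theorem followsSkeleton_shift_iterate (y : ℕ → 𝒜) (P m : ℕ) :
    FollowsSkeleton y P (m % P) (shift^[m] y) := by
  intro j hj
  rw [Nat.add_mod_mod] at hj ⊢
  rw [shift_iterate_apply, ← hj ((j + m) / P), Nat.mod_add_div']

theorem FollowsSkeleton.hasPeriodAt {y z : ℕ → 𝒜} {P ρ n : ℕ} (h : FollowsSkeleton y P ρ z)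
    (hn : HasPeriodAt y ((n + ρ) % P) P) : HasPeriodAt z n P := by
  intro k
  have hres : (n + k * P + ρ) % P = (n + ρ) % P := by
    rw [add_right_comm, Nat.add_mul_mod_self_right]
  rw [h _ (by rwa [hres]), h n hn, hres]

/-- Following its own skeleton with phase `ρ`, `y` transports periodicity at residue `c + ρ` back
to residue `c`; as `P * ρ ≡ 0`, doing this `P - 1` times moves from `c` forward to `c + ρ`. -/
theorem FollowsSkeleton.hasPeriodAt_add_mod {y : ℕ → 𝒜} {P ρ c : ℕ} (hP : 0 < P)
    (h : FollowsSkeleton y P ρ y) (hc : HasPeriodAt y (c % P) P) :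
    HasPeriodAt y ((c + ρ) % P) P := by
  have back : ∀ m c, HasPeriodAt y ((c + m * ρ) % P) P → HasPeriodAt y (c % P) P := by
    intro m
    induction m with
    | zero => simp
    | succ m ih =>
      intro c hc
      have hsum : c + ρ + m * ρ = c + (m + 1) * ρ := by ring
      exact h.hasPeriodAt (by rw [Nat.mod_add_mod]; exact ih (c + ρ) (by rwa [hsum]))
  refine back (P - 1) (c + ρ) ?_
  obtain ⟨Q, rfl⟩ : ∃ Q, P = Q + 1 := ⟨P - 1, by omega⟩
  rwa [Nat.add_sub_cancel, show c + ρ + Q * ρ = c + ρ * (Q + 1) by ring,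
    Nat.add_mul_mod_self_right]

end Skeleton

section Topology

variable {𝒜 : Type*} [TopologicalSpace 𝒜]

theorem continuous_shift : Continuous (shift : (ℕ → 𝒜) → ℕ → 𝒜) :=
  continuous_pi fun n => continuous_apply (n + 1)

theorem mapsTo_shift_iterate_orbitClosure (x : ℕ → 𝒜) (m : ℕ) :
    MapsTo shift^[m] (orbitClosure x) (orbitClosure x) := by
  refine MapsTo.closure ?_ (continuous_shift.iterate m)
  rintro _ ⟨n, rfl⟩
  exact ⟨m + n, Function.iterate_add_apply _ m n x⟩

theorem orbitClosure_subset_of_mem {x y : ℕ → 𝒜} (h : y ∈ orbitClosure x) :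
    orbitClosure y ⊆ orbitClosure x := by
  refine closure_minimal ?_ isClosed_closure
  rintro _ ⟨m, rfl⟩
  exact mapsTo_shift_iterate_orbitClosure x m h

theorem isClosed_cylinder [T1Space 𝒜] (x : ℕ → 𝒜) (n : ℕ) : IsClosed (cylinder x n) := by
  rw [cylinder_eq_pi]
  exact isClosed_set_pi fun i _ => isClosed_singleton

theorem isClosed_setOf_followsSkeleton [T1Space 𝒜] (y : ℕ → 𝒜) (P ρ : ℕ) :
    IsClosed {z : ℕ → 𝒜 | FollowsSkeleton y P ρ z} := by
  simp only [FollowsSkeleton, ofPred_forall]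
  exact isClosed_iInter fun j =>
    isClosed_iInter fun _ => isClosed_singleton.preimage (continuous_apply j)

theorem exists_followsSkeleton_of_mem_orbitClosure [T1Space 𝒜] {y z : ℕ → 𝒜} {P : ℕ}
    (hP : 0 < P) (hz : z ∈ orbitClosure y) : ∃ ρ < P, FollowsSkeleton y P ρ z := by
  have hclosed : IsClosed (⋃ ρ ∈ Iio P, {z | FollowsSkeleton y P ρ z}) :=
    (finite_Iio P).isClosed_biUnion fun ρ _ => isClosed_setOf_followsSkeleton y P ρ
  have hmem := closure_minimal (s := {w | ∃ m, shift^[m] y = w}) (by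
    rintro _ ⟨m, rfl⟩
    exact mem_biUnion (Nat.mod_lt m hP) (followsSkeleton_shift_iterate y P m)) hclosed hz
  simpa using hmem

theorem IsToeplitz.exists_eventually_hasPeriodAt [T1Space 𝒜] {y : ℕ → 𝒜}
    (hy : IsToeplitz y) (n : ℕ) :
    ∃ P, 0 < P ∧ ∀ᶠ z in 𝓝 y, z ∈ orbitClosure y → HasPeriodAt z n P := by
  obtain ⟨P, hP, hyP⟩ := hy.exists_hasPeriodAt_of_lt (n + 1)
  refine ⟨P, hP, ?_⟩
  have hphase : ∀ ρ ∈ Iio P,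
      ∀ᶠ z in 𝓝 y, FollowsSkeleton y P ρ z → HasPeriodAt y ((n + ρ) % P) P := by
    intro ρ _
    by_cases hρ : HasPeriodAt y ((n + ρ) % P) P
    · exact .of_forall fun _ _ => hρ
    · have hyρ : y ∉ {z | FollowsSkeleton y P ρ z} := fun hyρ =>
        hρ (hyρ.hasPeriodAt_add_mod hP (hyP _ (Nat.lt_succ_of_le (Nat.mod_le n P))))
      filter_upwards [(isClosed_setOf_followsSkeleton y P ρ).isOpen_compl.mem_nhds hyρ]
        with z hz hzρ using absurd hzρ hz
  filter_upwards [(eventually_all_finite (finite_Iio P)).2 hphase] with z hz hzy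
  obtain ⟨ρ, hρ, hzρ⟩ := exists_followsSkeleton_of_mem_orbitClosure hP hzy
  exact hzρ.hasPeriodAt (hz ρ hρ hzρ)

variable [DiscreteTopology 𝒜]

theorem hasBasis_nhds_cylinder (x : ℕ → 𝒜) : (𝓝 x).HasBasis (fun _ => True) (cylinder x) :=
  (isTopologicalBasis_cylinders _).nhds_hasBasis.to_hasBasis
    (fun _ ⟨⟨_, n, hn⟩, hx⟩ => ⟨n, trivial, by subst hn; exact (mem_cylinder_iff_eq.1 hx).le⟩)
    (fun n _ => ⟨cylinder x n, ⟨⟨x, n, rfl⟩, self_mem_cylinder x n⟩, subset_rfl⟩)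

theorem IsToeplitz.mem_orbitClosure_of_mem {ω z : ℕ → 𝒜} (hω : IsToeplitz ω)
    (hz : z ∈ orbitClosure ω) : ω ∈ orbitClosure z := by
  rw [orbitClosure, mem_closure_iff_nhds_basis' (hasBasis_nhds_cylinder ω)]
  intro N _
  obtain ⟨P, hP, hωP⟩ := hω.exists_hasPeriodAt_of_lt N
  have hreturn : ∀ k, shift^[k * P] ω ∈ cylinder ω N := fun k =>
    mem_cylinder_iff.2 fun i hi => by rw [shift_iterate_apply]; exact hωP i hi k
  -- every point of `Z(ω,σ)` enters `cylinder ω N` within `P` steps, a closed condition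
  have hclosed : IsClosed (⋃ j ∈ Iic P, shift^[j] ⁻¹' cylinder ω N) :=
    (finite_Iic P).isClosed_biUnion fun j _ =>
      (isClosed_cylinder ω N).preimage (continuous_shift.iterate j)
  have hmem := closure_minimal (s := {w | ∃ m, shift^[m] ω = w}) (by
    rintro _ ⟨m, rfl⟩
    refine mem_biUnion (x := P - m % P) (Nat.sub_le P _) ?_
    have hsum : P - m % P + m = (m / P + 1) * P := by
      have := Nat.mod_add_div' m P
      have := Nat.mod_lt m hP
      rw [add_one_mul]
      omega
    rw [mem_preimage, ← Function.iterate_add_apply, hsum]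
    exact hreturn _) hclosed hz
  obtain ⟨j, -, hj⟩ := mem_iUnion₂.1 hmem
  exact ⟨_, hj, j, rfl⟩

theorem IsToeplitz.orbitClosure_subset {ω y : ℕ → 𝒜} (hω : IsToeplitz ω)
    (hy : y ∈ orbitClosure ω) : orbitClosure ω ⊆ orbitClosure y :=
  orbitClosure_subset_of_mem (hω.mem_orbitClosure_of_mem hy)

end Topology

theorem isGδ_iInter_of_forall_mem_nhds {X ι : Type*} [TopologicalSpace X] [Countable ι]
    {A : ι → Set X} (h : ∀ x ∈ ⋂ i, A i, ∀ i, A i ∈ 𝓝 x) : IsGδ (⋂ i, A i) := by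
  have hint : ⋂ i, A i = ⋂ i, interior (A i) :=
    Subset.antisymm (fun x hx => mem_iInter.2 fun i => mem_interior_iff_mem_nhds.2 (h x hx i))
      (iInter_mono fun _ => interior_subset)
  rw [hint]
  exact .iInter fun _ => isOpen_interior.isGδ

theorem stmt12_general {𝒜 : Type*} [TopologicalSpace 𝒜] [DiscreteTopology 𝒜]
    (ω : ℕ → 𝒜) (hT : IsToeplitz ω) :
    IsGδ {x : ↥(orbitClosure ω) | IsToeplitz (x : ℕ → 𝒜)} ∧
    Dense {x : ↥(orbitClosure ω) | IsToeplitz (x : ℕ → 𝒜)} := by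
  constructor
  · simp only [IsToeplitz, ofPred_forall]
    refine isGδ_iInter_of_forall_mem_nhds fun x hx n => ?_
    obtain ⟨P, hP, hnear⟩ :=
      IsToeplitz.exists_eventually_hasPeriodAt (by simpa [IsToeplitz] using hx) n
    have hsub := hT.orbitClosure_subset x.2
    filter_upwards [continuous_subtype_val.continuousAt.eventually hnear] with z hz
    exact ⟨P, hP, fun k _ => hz (hsub z.2) k⟩
  · rw [Subtype.dense_iff]
    refine closure_mono ?_
    rintro _ ⟨m, rfl⟩
    exact ⟨⟨_, subset_closure ⟨m, rfl⟩⟩, hT.shift_iterate m, rfl⟩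

/-- For a Toeplitz sequence `ω`, the set of Toeplitz sequences in `Z(ω,σ)` is a
residual subset of the space `Z(ω,σ)`: a countable intersection of open sets (a Gδ)
that is dense. -/
theorem stmt12 {𝒜 : Type*} [Fintype 𝒜] [Nonempty 𝒜] [TopologicalSpace 𝒜] [DiscreteTopology 𝒜]
    (ω : ℕ → 𝒜) (hT : IsToeplitz ω) :
    IsGδ {x : ↥(orbitClosure ω) | IsToeplitz (x : ℕ → 𝒜)} ∧
    Dense {x : ↥(orbitClosure ω) | IsToeplitz (x : ℕ → 𝒜)} :=
  stmt12_general ω hT
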